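/- arXiv:1701.01482 — 6 statements merged into one kernel-verified Lean document; each statement's English description precedes it below -/
import Mathlib

section
/- Let (a,x) be a signal with d nodes forming an (i,h,M)-cluster, let κ = (x_i + x_{i+1})/2, and let N ≥ 2d. Set C = 18·M·(1+|κ|)^N. Then for every ε ≥ C·h³, the h-local Prony curve S_{(a,x),i}(h) is contained in the ε-error set E_ε(a,x); that is, every signal (a',x') ∈ S_{(a,x),i}(h) satisfies |m_k(a',x') − m_k(a,x)| ≤ ε for all k = 0, 1, …, N−1. -/
open Finset

set_option maxHeartbeats 1000000

/-- If `(a,x)` is a `d`-node signal (nodes indexed `0,…,d-1`, strictly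
increasing) forming an `(i,h,M)`-cluster, `κ = (x_i + x_{i+1})/2`, `N ≥ 2d` and
`C = 18·M·(1+|κ|)^N`, then for every `ε ≥ C·h³` every signal on the `h`-local Prony
curve `S_{(a,x),i}(h)` lies in the `ε`-error set `E_ε(a,x)`. -/
theorem local_prony_curve_subset_error_set
    (d N : ℕ) (a x : ℕ → ℝ) (i : ℕ) (h M ε : ℝ)
    (hid : i + 1 < d)
    (hord : ∀ j, j + 1 < d → x j < x (j + 1))
    (hh0 : 0 < h) (hh1 : h < 1) (hM : 0 < M)
    (hcl : x (i + 1) - x i = h)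
    (hai : |a i| ≤ M) (hai1 : |a (i + 1)| ≤ M)
    (hN : 2 * d ≤ N)
    (hε : 18 * M * (1 + |(x i + x (i + 1)) / 2|) ^ N * h ^ 3 ≤ ε)
    (a' x' : ℕ → ℝ)
    (hord' : ∀ j, j + 1 < d → x' j < x' (j + 1))
    (hfix : ∀ j < d, j ≠ i → j ≠ i + 1 → a' j = a j ∧ x' j = x j)
    (hmom : ∀ k ≤ 2, ∑ j ∈ range d, a' j * x' j ^ k = ∑ j ∈ range d, a j * x j ^ k)
    (hdisk : (x' i - x i) ^ 2 + (x' (i + 1) - x (i + 1)) ^ 2 ≤ (h / 2) ^ 2) :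
    ∀ k < N, |∑ j ∈ range d, a' j * x' j ^ k - ∑ j ∈ range d, a j * x j ^ k| ≤ ε := by
  set A := a' i with hA
  set B := a' (i + 1) with hB
  set p := x' i with hp
  set q := x' (i + 1) with hq
  set r := x i with hr
  set s := x (i + 1) with hs
  set κ := (x i + x (i + 1)) / 2 with hκ
  -- reduction of the moment difference to the two moved nodes
  have hsplit : ∀ k : ℕ,
      (∑ j ∈ range d, a' j * x' j ^ k) - ∑ j ∈ range d, a j * x j ^ k
        = A * p ^ k + B * q ^ k - (a i * r ^ k + a (i + 1) * s ^ k) := by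
    intro k
    rw [← Finset.sum_sub_distrib]
    have hsub : ({i, i + 1} : Finset ℕ) ⊆ range d := by
      intro j hj
      simp only [Finset.mem_insert, Finset.mem_singleton] at hj
      rcases hj with rfl | rfl <;> simp [Finset.mem_range] <;> omega
    rw [← Finset.sum_subset hsub (by
      intro j hj hnj
      simp only [Finset.mem_insert, Finset.mem_singleton, not_or] at hnj
      obtain ⟨h1, h2⟩ := hfix j (Finset.mem_range.1 hj) hnj.1 hnj.2
      rw [h1, h2]; ring)]
    rw [Finset.sum_pair (by omega : i ≠ i + 1)]
    ring
  have hm : ∀ k ≤ 2, A * p ^ k + B * q ^ k - (a i * r ^ k + a (i + 1) * s ^ k) = 0 := by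
    intro k hk
    have h1 := hsplit k
    have h2 := hmom k hk
    linarith [h1, h2]
  have hm0 := hm 0 (by norm_num)
  have hm1 := hm 1 (by norm_num)
  have hm2 := hm 2 (by norm_num)
  have hsr : s = r + h := by rw [hs, hr]; linarith [hcl]
  -- bounds on node displacements
  have hd0 : |p - r| ≤ h / 2 := by
    rw [abs_le]
    constructor <;> nlinarith [hdisk, sq_nonneg (q - s), hh0, sq_nonneg (p - r + h / 2),
      sq_nonneg (p - r - h / 2)]
  have hd1 : |q - s| ≤ h / 2 := by
    rw [abs_le]
    constructor <;> nlinarith [hdisk, sq_nonneg (p - r), hh0, sq_nonneg (q - s + h / 2),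
      sq_nonneg (q - s - h / 2)]
  obtain ⟨hd0l, hd0r⟩ := abs_le.1 hd0
  obtain ⟨hd1l, hd1r⟩ := abs_le.1 hd1
  -- the new nodes keep a gap of at least h/4
  have hdd : (p - r - (q - s)) ^ 2 ≤ h ^ 2 / 2 := by
    nlinarith [sq_nonneg (p - r + (q - s))]
  have hgap : h / 4 ≤ q - p := by nlinarith [hdd, hh0, hsr]
  obtain ⟨hail, hair⟩ := abs_le.1 hai
  obtain ⟨hai1l, hai1r⟩ := abs_le.1 hai1
  -- bounds on new amplitudes
  have hAe : A * (q - p) = a i * (q - r) + a (i + 1) * (q - s) := by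
    linear_combination q * hm0 - hm1
  have hBe : B * (q - p) = a i * (r - p) + a (i + 1) * (s - p) := by
    linear_combination hm1 - p * hm0
  have habsA : |A * (q - p)| ≤ 2 * M * h := by
    rw [hAe]
    calc |a i * (q - r) + a (i + 1) * (q - s)|
        ≤ |a i * (q - r)| + |a (i + 1) * (q - s)| := abs_add_le _ _
      _ ≤ M * (3 * h / 2) + M * (h / 2) := by
          refine add_le_add ?_ ?_
          · rw [abs_mul]
            exact mul_le_mul hai (abs_le.2 ⟨by linarith, by linarith⟩) (abs_nonneg _) hM.le
          · rw [abs_mul]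
            exact mul_le_mul hai1 (abs_le.2 ⟨by linarith, by linarith⟩) (abs_nonneg _) hM.le
      _ = 2 * M * h := by ring
  have habsB : |B * (q - p)| ≤ 2 * M * h := by
    rw [hBe]
    calc |a i * (r - p) + a (i + 1) * (s - p)|
        ≤ |a i * (r - p)| + |a (i + 1) * (s - p)| := abs_add_le _ _
      _ ≤ M * (h / 2) + M * (3 * h / 2) := by
          refine add_le_add ?_ ?_
          · rw [abs_mul]
            exact mul_le_mul hai (abs_le.2 ⟨by linarith, by linarith⟩) (abs_nonneg _) hM.le
          · rw [abs_mul]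
            exact mul_le_mul hai1 (abs_le.2 ⟨by linarith, by linarith⟩) (abs_nonneg _) hM.le
      _ = 2 * M * h := by ring
  have hA8 : |A| ≤ 8 * M := by
    have h1 : |A| * (q - p) ≤ 2 * M * h := by
      rw [← abs_of_pos (show (0:ℝ) < q - p by linarith), ← abs_mul]; exact habsA
    nlinarith [abs_nonneg A, hgap, hh0]
  have hB8 : |B| ≤ 8 * M := by
    have h1 : |B| * (q - p) ≤ 2 * M * h := by
      rw [← abs_of_pos (show (0:ℝ) < q - p by linarith), ← abs_mul]; exact habsB
    nlinarith [abs_nonneg B, hgap, hh0]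
  -- all four nodes are within h of the center κ
  have hκr : κ = r + h / 2 := by rw [hκ, ← hr, ← hs, hsr]; ring
  have hpκ : |p - κ| ≤ h := by rw [abs_le, hκr]; constructor <;> linarith
  have hqκ : |q - κ| ≤ h := by rw [abs_le, hκr]; constructor <;> linarith
  have hrκ : |r - κ| ≤ h := by rw [abs_le, hκr]; constructor <;> linarith
  have hsκ : |s - κ| ≤ h := by rw [abs_le, hκr]; constructor <;> linarith
  -- Taylor coefficients at κ
  set δ : ℕ → ℝ := fun m =>
    A * (p - κ) ^ m + B * (q - κ) ^ m - (a i * (r - κ) ^ m + a (i + 1) * (s - κ) ^ m)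
    with hδdef
  have hδ0 : δ 0 = 0 := by simp only [hδdef]; linear_combination hm0
  have hδ1 : δ 1 = 0 := by simp only [hδdef]; linear_combination hm1 - κ * hm0
  have hδ2 : δ 2 = 0 := by
    simp only [hδdef]; linear_combination hm2 - 2 * κ * hm1 + κ ^ 2 * hm0
  have habsδ : ∀ n : ℕ, |δ n| ≤ 18 * M * h ^ n := by
    intro n
    have hb : ∀ (c y : ℝ) (c' : ℝ), |c| ≤ c' → |y - κ| ≤ h → |c * (y - κ) ^ n| ≤ c' * h ^ n := by
      intro c y c' hc hy
      rw [abs_mul, abs_pow]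
      exact mul_le_mul hc (pow_le_pow_left₀ (abs_nonneg _) hy n)
        (pow_nonneg (abs_nonneg _) n) ((abs_nonneg c).trans hc)
    have b1 := hb A p (8 * M) hA8 hpκ
    have b2 := hb B q (8 * M) hB8 hqκ
    have b3 := hb (a i) r M hai hrκ
    have b4 := hb (a (i + 1)) s M hai1 hsκ
    have e1 : |A * (p - κ) ^ n + B * (q - κ) ^ n| ≤ 16 * M * h ^ n :=
      (abs_add_le _ _).trans (by linarith)
    have e2 : |a i * (r - κ) ^ n + a (i + 1) * (s - κ) ^ n| ≤ 2 * M * h ^ n :=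
      (abs_add_le _ _).trans (by linarith)
    have : |δ n| ≤ 16 * M * h ^ n + 2 * M * h ^ n := by
      simp only [hδdef]
      exact (abs_sub _ _).trans (add_le_add e1 e2)
    linarith
  have hδall : ∀ m : ℕ, |δ m| ≤ 18 * M * h ^ 3 := by
    intro m
    match m with
    | 0 => rw [hδ0, abs_zero]; positivity
    | 1 => rw [hδ1, abs_zero]; positivity
    | 2 => rw [hδ2, abs_zero]; positivity
    | (n + 3) =>
      refine (habsδ (n + 3)).trans ?_
      have h3 : h ^ (n + 3) ≤ h ^ 3 := pow_le_pow_of_le_one hh0.le hh1.le (by omega)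
      exact mul_le_mul_of_nonneg_left h3 (by positivity)
  -- binomial expansion around κ
  have hbin : ∀ (y : ℝ) (k : ℕ),
      y ^ k = ∑ m ∈ range (k + 1), (y - κ) ^ m * κ ^ (k - m) * (k.choose m : ℝ) := by
    intro y k
    conv_lhs => rw [show y = y - κ + κ by ring]
    exact add_pow _ _ _
  have hEexp : ∀ k : ℕ,
      A * p ^ k + B * q ^ k - (a i * r ^ k + a (i + 1) * s ^ k)
        = ∑ m ∈ range (k + 1), (k.choose m : ℝ) * κ ^ (k - m) * δ m := by
    intro k
    rw [hbin p k, hbin q k, hbin r k, hbin s k, Finset.mul_sum, Finset.mul_sum,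
      Finset.mul_sum, Finset.mul_sum, ← Finset.sum_add_distrib, ← Finset.sum_add_distrib,
      ← Finset.sum_sub_distrib]
    exact Finset.sum_congr rfl fun m _ => by simp only [hδdef]; ring
  -- final estimate
  intro k hk
  rw [hsplit k, hEexp k]
  have hone : (1 : ℝ) ≤ 1 + |κ| := le_add_of_nonneg_right (abs_nonneg κ)
  calc |∑ m ∈ range (k + 1), (k.choose m : ℝ) * κ ^ (k - m) * δ m|
      ≤ ∑ m ∈ range (k + 1), |(k.choose m : ℝ) * κ ^ (k - m) * δ m| :=
        Finset.abs_sum_le_sum_abs _ _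
    _ ≤ ∑ m ∈ range (k + 1), (k.choose m : ℝ) * |κ| ^ (k - m) * (18 * M * h ^ 3) := by
        refine Finset.sum_le_sum fun m _ => ?_
        rw [abs_mul, abs_mul, abs_pow, Nat.abs_cast]
        exact mul_le_mul_of_nonneg_left (hδall m) (by positivity)
    _ = (∑ m ∈ range (k + 1), (1 : ℝ) ^ m * |κ| ^ (k - m) * (k.choose m : ℝ))
          * (18 * M * h ^ 3) := by
        rw [Finset.sum_mul]
        exact Finset.sum_congr rfl fun m _ => by ring
    _ = (1 + |κ|) ^ k * (18 * M * h ^ 3) := by rw [← add_pow]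
    _ ≤ (1 + |κ|) ^ N * (18 * M * h ^ 3) := by
        refine mul_le_mul_of_nonneg_right (pow_le_pow_right₀ hone hk.le) (by positivity)
    _ = 18 * M * (1 + |κ|) ^ N * h ^ 3 := by ring
    _ ≤ ε := hε
end

section
/- Let (a,x) be a signal with d nodes forming an (i,h,M)-cluster and let κ = (x_i + x_{i+1})/2. Then for every signal (a',x') on the h-local Prony curve S_{(a,x),i}(h) one has m_k(a',x') − m_k(a,x) = 0 for k = 0, 1, 2, and |m_k(a',x') − m_k(a,x)| ≤ 18·M·(1+|κ|)^k·h³ for every integer k ≥ 3. -/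
open Finset

private lemma prony_aux_abs (d1 d2 h : ℝ) (hd : d1^2 + d2^2 ≤ (h/2)^2) (hh : 0 < h) :
    |d1| ≤ h/2 := by
  have h1 : d1^2 ≤ (h/2)^2 := by nlinarith [sq_nonneg d2]
  exact abs_le.mpr (abs_le_of_sq_le_sq' h1 (by linarith))

private lemma prony_aux_gap (d1 d2 h : ℝ) (hd : d1^2 + d2^2 ≤ (h/2)^2) (hh : 0 < h) :
    d1 - d2 ≤ 3*h/4 := by
  nlinarith [sq_nonneg (d1 + d2), sq_nonneg (d1 - d2 - 3*h/4)]

private lemma prony_aux_rhs (M h t A B : ℝ) (hM : 0 < M) (hh : 0 < h)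
    (ht : |t| ≤ h) (hA : |A| ≤ M) (hB : |B| ≤ M) :
    |t * ((B - A) * (h/2)) - (A + B) * (h/2)^2| ≤ (3/2) * M * h^2 := by
  have hBA : |B - A| ≤ M + M := (abs_sub B A).trans (by linarith)
  have hAB : |A + B| ≤ M + M := (abs_add_le A B).trans (by linarith)
  have h1 : |t * ((B - A) * (h/2))| ≤ h * ((M + M) * (h/2)) := by
    rw [abs_mul, abs_mul, abs_of_pos (by linarith : (0:ℝ) < h/2)]
    gcongr
  have h2 : |(A + B) * (h/2)^2| ≤ (M + M) * (h/2)^2 := by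
    rw [abs_mul, abs_pow, abs_of_pos (by linarith : (0:ℝ) < h/2)]
    gcongr
  calc |t * ((B - A) * (h/2)) - (A + B) * (h/2)^2|
      ≤ |t * ((B - A) * (h/2))| + |(A + B) * (h/2)^2| := abs_sub _ _
    _ ≤ h * ((M + M) * (h/2)) + (M + M) * (h/2)^2 := add_le_add h1 h2
    _ = (3/2) * M * h^2 := by ring

private lemma prony_aux_div (P h M : ℝ) (hh : 0 < h) (hM : 0 < M)
    (h1 : |P| * (h/4) ≤ (3/2) * M * h^2) : |P| ≤ 6 * M * h := by
  nlinarith [abs_nonneg P]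

set_option maxHeartbeats 1000000 in
/-- Along the `h`-local Prony curve `S_{(a,x),i}(h)` of a signal forming an
`(i,h,M)`-cluster, the first three moments are preserved, while for `k ≥ 3` the moments
change by at most `18·M·(1+|κ|)^k·h³`, where `κ = (x_i + x_{i+1})/2`. -/
theorem moments_on_prony_curve
    (d : ℕ) (a x : ℕ → ℝ) (i : ℕ) (h M : ℝ)
    (hid : i + 1 < d)
    (hord : ∀ j, j + 1 < d → x j < x (j + 1))
    (hh0 : 0 < h) (hh1 : h < 1) (hM : 0 < M)
    (hcl : x (i + 1) - x i = h)
    (hai : |a i| ≤ M) (hai1 : |a (i + 1)| ≤ M)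
    (a' x' : ℕ → ℝ)
    (hord' : ∀ j, j + 1 < d → x' j < x' (j + 1))
    (hfix : ∀ j < d, j ≠ i → j ≠ i + 1 → a' j = a j ∧ x' j = x j)
    (hmom : ∀ k ≤ 2, ∑ j ∈ range d, a' j * x' j ^ k = ∑ j ∈ range d, a j * x j ^ k)
    (hdisk : (x' i - x i) ^ 2 + (x' (i + 1) - x (i + 1)) ^ 2 ≤ (h / 2) ^ 2) :
    (∀ k ≤ 2, ∑ j ∈ range d, a' j * x' j ^ k - ∑ j ∈ range d, a j * x j ^ k = 0) ∧
    (∀ k : ℕ, 3 ≤ k →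
      |∑ j ∈ range d, a' j * x' j ^ k - ∑ j ∈ range d, a j * x j ^ k| ≤
        18 * M * (1 + |(x i + x (i + 1)) / 2|) ^ k * h ^ 3) := by
  constructor
  · intro k hk; rw [hmom k hk, sub_self]
  intro k hk3
  set κ : ℝ := (x i + x (i + 1)) / 2 with hκdef
  -- reduce sums to the two cluster nodes
  have hred : ∀ n : ℕ, ∑ j ∈ range d, a' j * x' j ^ n - ∑ j ∈ range d, a j * x j ^ n
      = (a' i * x' i ^ n + a' (i+1) * x' (i+1) ^ n)
        - (a i * x i ^ n + a (i+1) * x (i+1) ^ n) := by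
    intro n
    rw [← Finset.sum_sub_distrib]
    have hsub : ({i, i+1} : Finset ℕ) ⊆ range d := by
      intro j hj
      simp only [mem_insert, mem_singleton] at hj
      rcases hj with rfl | rfl <;> simp only [mem_range] <;> omega
    rw [← Finset.sum_subset hsub]
    · rw [Finset.sum_pair (by omega : i ≠ i + 1)]
      ring
    · intro j hj hj2
      simp only [mem_insert, mem_singleton, not_or] at hj2
      obtain ⟨h1, h2⟩ := hfix j (mem_range.mp hj) hj2.1 hj2.2
      rw [h1, h2, sub_self]
  have hE : ∀ n, n ≤ 2 → a' i * x' i ^ n + a' (i+1) * x' (i+1) ^ n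
      = a i * x i ^ n + a (i+1) * x (i+1) ^ n := by
    intro n hn
    have h1 := hred n
    rw [hmom n hn, sub_self] at h1
    linarith
  have hE0 := hE 0 (by norm_num)
  have hE1 := hE 1 (by norm_num)
  have hE2 := hE 2 (by norm_num)
  simp only [pow_zero, mul_one, pow_one] at hE0 hE1
  -- geometry
  have hu : x i - κ = -(h/2) := by rw [hκdef]; linarith
  have hv : x (i+1) - κ = h/2 := by rw [hκdef]; linarith
  have hd1 : |x' i - x i| ≤ h/2 := prony_aux_abs _ _ _ hdisk hh0
  have hd2 : |x' (i+1) - x (i+1)| ≤ h/2 := by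
    refine prony_aux_abs _ (x' i - x i) _ ?_ hh0
    linarith [hdisk]
  rw [abs_le] at hd1 hd2 hai hai1
  have hs : |x' i - κ| ≤ h := by
    rw [abs_le]; constructor <;> [linarith [hd1.1, hu]; linarith [hd1.2, hu]]
  have ht : |x' (i+1) - κ| ≤ h := by
    rw [abs_le]; constructor <;> [linarith [hd2.1, hv]; linarith [hd2.2, hv]]
  have hsle := abs_le.mp hs
  have htle := abs_le.mp ht
  have hdd : (x' i - x i) - (x' (i+1) - x (i+1)) ≤ 3*h/4 :=
    prony_aux_gap _ _ _ hdisk hh0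
  have hgap : h/4 ≤ (x' (i+1) - κ) - (x' i - κ) := by linarith
  -- shifted moment relations
  have hP1 : a' i * (x' i - κ) + a' (i+1) * (x' (i+1) - κ)
      = (a (i+1) - a i) * (h/2) := by
    linear_combination hE1 - κ * hE0 + a i * hu + a (i+1) * hv
  have hP2 : a' i * (x' i - κ)^2 + a' (i+1) * (x' (i+1) - κ)^2
      = (a i + a (i+1)) * (h/2)^2 := by
    linear_combination hE2 - 2*κ*hE1 + κ^2*hE0 + (a i * (x i - κ - h/2)) * hu
      + (a (i+1) * (x (i+1) - κ + h/2)) * hv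
  -- amplitude·offset bounds
  have hkey1 : a' i * (x' i - κ) * ((x' (i+1) - κ) - (x' i - κ))
      = (x' (i+1) - κ) * ((a (i+1) - a i) * (h/2)) - (a i + a (i+1)) * (h/2)^2 := by
    linear_combination (x' (i+1) - κ) * hP1 - hP2
  have hkey2 : a' (i+1) * (x' (i+1) - κ) * ((x' (i+1) - κ) - (x' i - κ))
      = (a i + a (i+1)) * (h/2)^2 - (x' i - κ) * ((a (i+1) - a i) * (h/2)) := by
    linear_combination hP2 - (x' i - κ) * hP1
  have hgap0 : (0:ℝ) < (x' (i+1) - κ) - (x' i - κ) := by linarith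
  have hrhs1 : |(x' (i+1) - κ) * ((a (i+1) - a i) * (h/2)) - (a i + a (i+1)) * (h/2)^2|
      ≤ (3/2) * M * h^2 :=
    prony_aux_rhs M h _ (a i) (a (i+1)) hM hh0 ht (abs_le.mpr hai) (abs_le.mpr hai1)
  have hrhs2 : |(a i + a (i+1)) * (h/2)^2 - (x' i - κ) * ((a (i+1) - a i) * (h/2))|
      ≤ (3/2) * M * h^2 := by
    rw [abs_sub_comm]
    exact prony_aux_rhs M h _ (a i) (a (i+1)) hM hh0 hs (abs_le.mpr hai) (abs_le.mpr hai1)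
  have hps : |a' i * (x' i - κ)| ≤ 6 * M * h := by
    have h1 : |a' i * (x' i - κ)| * (h/4)
        ≤ |a' i * (x' i - κ) * ((x' (i+1) - κ) - (x' i - κ))| := by
      rw [abs_mul (a' i * (x' i - κ)) ((x' (i+1) - κ) - (x' i - κ)), abs_of_pos hgap0]
      exact mul_le_mul_of_nonneg_left hgap (abs_nonneg _)
    rw [hkey1] at h1
    exact prony_aux_div _ _ _ hh0 hM (h1.trans hrhs1)
  have hqt : |a' (i+1) * (x' (i+1) - κ)| ≤ 6 * M * h := by
    have h1 : |a' (i+1) * (x' (i+1) - κ)| * (h/4)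
        ≤ |a' (i+1) * (x' (i+1) - κ) * ((x' (i+1) - κ) - (x' i - κ))| := by
      rw [abs_mul (a' (i+1) * (x' (i+1) - κ)) ((x' (i+1) - κ) - (x' i - κ)),
        abs_of_pos hgap0]
      exact mul_le_mul_of_nonneg_left hgap (abs_nonneg _)
    rw [hkey2] at h1
    exact prony_aux_div _ _ _ hh0 hM (h1.trans hrhs2)
  -- the cluster moment differences
  set P : ℕ → ℝ := fun j => a' i * (x' i - κ)^j + a' (i+1) * (x' (i+1) - κ)^j
      - a i * (-(h/2))^j - a (i+1) * (h/2)^j with hPdef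
  have hP0' : P 0 = 0 := by simp only [hPdef, pow_zero, mul_one]; linarith
  have hP1' : P 1 = 0 := by simp only [hPdef, pow_one]; linarith [hP1]
  have hP2' : P 2 = 0 := by
    simp only [hPdef]
    have : (-(h/2))^2 = (h/2)^2 := by ring
    rw [this]
    linarith [hP2]
  have habs_sub : ∀ u v : ℝ, |u - v| ≤ |u| + |v| := fun u v => abs_sub u v
  have hPbig : ∀ j, 3 ≤ j → |P j| ≤ 13 * M * h^3 := by
    intro j hj
    have hhj : h^j ≤ h^3 := pow_le_pow_of_le_one hh0.le hh1.le hj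
    have hh2j : (h/2)^j ≤ (h/2)^3 :=
      pow_le_pow_of_le_one (by linarith) (by linarith) hj
    obtain ⟨m, rfl⟩ : ∃ m, j = m + 1 := ⟨j - 1, by omega⟩
    have hsm : |x' i - κ|^m ≤ h^m := pow_le_pow_left₀ (abs_nonneg _) hs m
    have htm : |x' (i+1) - κ|^m ≤ h^m := pow_le_pow_left₀ (abs_nonneg _) ht m
    have hhm : (0:ℝ) ≤ h^m := by positivity
    have e1 : |a' i * (x' i - κ)^(m+1)| ≤ 6 * M * h^(m+1) := by
      rw [show a' i * (x' i - κ)^(m+1) = (a' i * (x' i - κ)) * (x' i - κ)^m from by ring,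
        abs_mul, abs_pow]
      calc |a' i * (x' i - κ)| * |x' i - κ|^m ≤ (6*M*h) * h^m :=
            mul_le_mul hps hsm (by positivity) (by positivity)
        _ = 6 * M * h^(m+1) := by ring
    have e2 : |a' (i+1) * (x' (i+1) - κ)^(m+1)| ≤ 6 * M * h^(m+1) := by
      rw [show a' (i+1) * (x' (i+1) - κ)^(m+1)
          = (a' (i+1) * (x' (i+1) - κ)) * (x' (i+1) - κ)^m from by ring,
        abs_mul, abs_pow]
      calc |a' (i+1) * (x' (i+1) - κ)| * |x' (i+1) - κ|^m ≤ (6*M*h) * h^m :=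
            mul_le_mul hqt htm (by positivity) (by positivity)
        _ = 6 * M * h^(m+1) := by ring
    have e3 : |a i * (-(h/2))^(m+1)| ≤ M * (h/2)^(m+1) := by
      rw [abs_mul, abs_pow, abs_neg, abs_of_pos (by linarith : (0:ℝ) < h/2)]
      exact mul_le_mul_of_nonneg_right (abs_le.mpr hai) (by positivity)
    have e4 : |a (i+1) * (h/2)^(m+1)| ≤ M * (h/2)^(m+1) := by
      rw [abs_mul, abs_pow, abs_of_pos (by linarith : (0:ℝ) < h/2)]
      exact mul_le_mul_of_nonneg_right (abs_le.mpr hai1) (by positivity)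
    have tri : |P (m+1)| ≤ |a' i * (x' i - κ)^(m+1)| + |a' (i+1) * (x' (i+1) - κ)^(m+1)|
        + |a i * (-(h/2))^(m+1)| + |a (i+1) * (h/2)^(m+1)| := by
      simp only [hPdef]
      calc |a' i * (x' i - κ)^(m+1) + a' (i+1) * (x' (i+1) - κ)^(m+1)
            - a i * (-(h/2))^(m+1) - a (i+1) * (h/2)^(m+1)|
          ≤ |a' i * (x' i - κ)^(m+1) + a' (i+1) * (x' (i+1) - κ)^(m+1)
            - a i * (-(h/2))^(m+1)| + |a (i+1) * (h/2)^(m+1)| := habs_sub _ _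
        _ ≤ |a' i * (x' i - κ)^(m+1) + a' (i+1) * (x' (i+1) - κ)^(m+1)|
            + |a i * (-(h/2))^(m+1)| + |a (i+1) * (h/2)^(m+1)| := by
            have := habs_sub (a' i * (x' i - κ)^(m+1) + a' (i+1) * (x' (i+1) - κ)^(m+1))
              (a i * (-(h/2))^(m+1))
            linarith
        _ ≤ |a' i * (x' i - κ)^(m+1)| + |a' (i+1) * (x' (i+1) - κ)^(m+1)|
            + |a i * (-(h/2))^(m+1)| + |a (i+1) * (h/2)^(m+1)| := by
            have := abs_add_le (a' i * (x' i - κ)^(m+1)) (a' (i+1) * (x' (i+1) - κ)^(m+1))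
            linarith
    have f1 : 6*M*h^(m+1) ≤ 6*M*h^3 := by
      have := mul_le_mul_of_nonneg_left hhj (by positivity : (0:ℝ) ≤ 6*M)
      linarith
    have f2 : M*(h/2)^(m+1) ≤ M*(h^3/8) := by
      have h38 : ((h:ℝ)/2)^3 = h^3/8 := by ring
      have := mul_le_mul_of_nonneg_left hh2j hM.le
      rw [h38] at this
      linarith
    have hMh3 : (0:ℝ) ≤ M * h^3 := by positivity
    linarith [tri, e1, e2, e3, e4, f1, f2, hMh3]
  -- binomial expansion about κ
  have hexp : ∀ (c z : ℝ), c * z ^ k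
      = ∑ j ∈ range (k+1), (k.choose j : ℝ) * κ^(k-j) * (c * (z - κ)^j) := by
    intro c z
    have h1 := add_pow (z - κ) κ k
    rw [show (z - κ) + κ = z from by ring] at h1
    rw [h1, Finset.mul_sum]
    exact Finset.sum_congr rfl fun j _ => by push_cast; ring
  have hΔ : (∑ j ∈ range d, a' j * x' j ^ k) - (∑ j ∈ range d, a j * x j ^ k)
      = ∑ j ∈ range (k+1), (k.choose j : ℝ) * κ^(k-j) * P j := by
    rw [hred k, hexp (a' i) (x' i), hexp (a' (i+1)) (x' (i+1)),
      hexp (a i) (x i), hexp (a (i+1)) (x (i+1)), hu, hv,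
      ← Finset.sum_add_distrib, ← Finset.sum_add_distrib, ← Finset.sum_sub_distrib]
    exact Finset.sum_congr rfl fun j _ => by simp only [hPdef]; ring
  have hterm : ∀ j ∈ range (k+1), |(k.choose j : ℝ) * κ^(k-j) * P j|
      ≤ (k.choose j : ℝ) * |κ|^(k-j) * (13*M*h^3) := by
    intro j _
    rw [abs_mul, abs_mul, abs_pow, Nat.abs_cast]
    rcases lt_or_ge j 3 with hj | hj
    · interval_cases j <;>
        simp only [hP0', hP1', hP2', abs_zero, mul_zero] <;> positivity
    · exact mul_le_mul_of_nonneg_left (hPbig j hj) (by positivity)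
  have hsum : ∑ j ∈ range (k+1), (k.choose j : ℝ) * |κ|^(k-j) * (13*M*h^3)
      = 13*M*h^3 * (1 + |κ|)^k := by
    have h1 := add_pow (1:ℝ) |κ| k
    rw [h1, Finset.mul_sum]
    exact Finset.sum_congr rfl fun j _ => by rw [one_pow]; ring
  calc |∑ j ∈ range d, a' j * x' j ^ k - ∑ j ∈ range d, a j * x j ^ k|
      = |∑ j ∈ range (k+1), (k.choose j : ℝ) * κ^(k-j) * P j| := by rw [hΔ]
    _ ≤ ∑ j ∈ range (k+1), |(k.choose j : ℝ) * κ^(k-j) * P j| :=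
        Finset.abs_sum_le_sum_abs _ _
    _ ≤ ∑ j ∈ range (k+1), (k.choose j : ℝ) * |κ|^(k-j) * (13*M*h^3) :=
        Finset.sum_le_sum hterm
    _ = 13*M*h^3 * (1 + |κ|)^k := hsum
    _ = 13 * (M * (1 + |κ|)^k * h^3) := by ring
    _ ≤ 18 * (M * (1 + |κ|)^k * h^3) :=
        mul_le_mul_of_nonneg_right (by norm_num) (by positivity)
    _ = 18 * M * (1 + |κ|)^k * h^3 := by ring
end

section
/- Let h > 0, M > 0, and let (a_1, a_2, x_1, x_2) be a two-node signal with x_2 = x_1 + h and |a_1|, |a_2| ≤ M. Let (a'_1, a'_2, x'_1, x'_2) be any two-node signal with x'_1 < x'_2 such that (x'_1 − x_1)² + (x'_2 − x_2)² ≤ (h/2)² and the first three moments agree: a'_1 (x'_1)^k + a'_2 (x'_2)^k = a_1 x_1^k + a_2 x_2^k for k = 0, 1, 2. Then |a'_1| ≤ 8M and |a'_2| ≤ 8M. -/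
/-- If a two-node signal `(a₁,a₂,x₁,x₂)` has `x₂ = x₁ + h` and
`|a₁|,|a₂| ≤ M`, then any two-node signal `(a'₁,a'₂,x'₁,x'₂)` with nodes in the disk of
radius `h/2` around `(x₁,x₂)` and the same first three moments has `|a'₁|,|a'₂| ≤ 8M`. -/
theorem amplitudes_bounded_on_prony_curve
    (h M a₁ a₂ x₁ x₂ a₁' a₂' x₁' x₂' : ℝ)
    (hh : 0 < h) (hM : 0 < M)
    (hx : x₂ = x₁ + h)
    (ha₁ : |a₁| ≤ M) (ha₂ : |a₂| ≤ M)
    (hx' : x₁' < x₂')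
    (hdisk : (x₁' - x₁) ^ 2 + (x₂' - x₂) ^ 2 ≤ (h / 2) ^ 2)
    (hmom : ∀ k ≤ 2, a₁' * x₁' ^ k + a₂' * x₂' ^ k = a₁ * x₁ ^ k + a₂ * x₂ ^ k) :
    |a₁'| ≤ 8 * M ∧ |a₂'| ≤ 8 * M := by
  have e0 := hmom 0 (by norm_num)
  have e1 := hmom 1 (by norm_num)
  simp only [pow_zero, pow_one, mul_one] at e0 e1
  -- separation of perturbed nodes
  have hd : h / 4 ≤ x₂' - x₁' := by
    nlinarith [sq_nonneg (x₁' - x₁ + (x₂' - x₂)), sq_nonneg (x₁' - x₁ - (x₂' - x₂)), hh.le]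
  have h1 : |x₂' - x₂| ≤ h / 2 := by
    rw [abs_le]; constructor <;> nlinarith [sq_nonneg (x₁' - x₁)]
  have h1' : |x₁' - x₁| ≤ h / 2 := by
    rw [abs_le]; constructor <;> nlinarith [sq_nonneg (x₂' - x₂)]
  have h2 : |x₂' - x₁| ≤ 3 * h / 2 := by
    have : x₂' - x₁ = (x₂' - x₂) + h := by rw [hx]; ring
    rw [this]
    calc |(x₂' - x₂) + h| ≤ |x₂' - x₂| + |h| := abs_add_le _ _
      _ ≤ h / 2 + h := by rw [abs_of_pos hh]; linarith
      _ = 3 * h / 2 := by ring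
  have h3 : |x₂ - x₁'| ≤ 3 * h / 2 := by
    have : x₂ - x₁' = h - (x₁' - x₁) := by rw [hx]; ring
    rw [this]
    calc |h - (x₁' - x₁)| ≤ |h| + |x₁' - x₁| := abs_sub _ _
      _ ≤ h + h / 2 := by rw [abs_of_pos hh]; linarith
      _ = 3 * h / 2 := by ring
  have key1 : a₁' * (x₂' - x₁') = a₁ * (x₂' - x₁) + a₂ * (x₂' - x₂) := by
    linear_combination x₂' * e0 - e1
  have key2 : a₂' * (x₂' - x₁') = a₁ * (x₁ - x₁') + a₂ * (x₂ - x₁') := by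
    linear_combination e1 - x₁' * e0
  have habs1 : |a₁'| * (x₂' - x₁') ≤ 2 * M * h := by
    have : |a₁'| * (x₂' - x₁') = |a₁' * (x₂' - x₁')| := by
      rw [abs_mul, abs_of_pos (by linarith : (0:ℝ) < x₂' - x₁')]
    rw [this, key1]
    calc |a₁ * (x₂' - x₁) + a₂ * (x₂' - x₂)| ≤ |a₁| * |x₂' - x₁| + |a₂| * |x₂' - x₂| := by
          rw [← abs_mul, ← abs_mul]; exact abs_add_le _ _
      _ ≤ M * (3 * h / 2) + M * (h / 2) :=
          add_le_add (mul_le_mul ha₁ h2 (abs_nonneg _) hM.le)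
            (mul_le_mul ha₂ h1 (abs_nonneg _) hM.le)
      _ = 2 * M * h := by ring
  have habs2 : |a₂'| * (x₂' - x₁') ≤ 2 * M * h := by
    have : |a₂'| * (x₂' - x₁') = |a₂' * (x₂' - x₁')| := by
      rw [abs_mul, abs_of_pos (by linarith : (0:ℝ) < x₂' - x₁')]
    rw [this, key2]
    have h1'' : |x₁ - x₁'| ≤ h / 2 := by rw [abs_sub_comm]; exact h1'
    calc |a₁ * (x₁ - x₁') + a₂ * (x₂ - x₁')| ≤ |a₁| * |x₁ - x₁'| + |a₂| * |x₂ - x₁'| := by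
          rw [← abs_mul, ← abs_mul]; exact abs_add_le _ _
      _ ≤ M * (h / 2) + M * (3 * h / 2) :=
          add_le_add (mul_le_mul ha₁ h1'' (abs_nonneg _) hM.le)
            (mul_le_mul ha₂ h3 (abs_nonneg _) hM.le)
      _ = 2 * M * h := by ring
  constructor
  · nlinarith [abs_nonneg a₁', habs1, hd]
  · nlinarith [abs_nonneg a₂', habs2, hd]
end

section
/- Let m_0, m_1 ∈ ℝ, h > 0, and let x_1 < x_2 and x'_1 < x'_2 be real numbers with x_2 − x_1 = h, x'_2 − x'_1 ≥ h/4, and |x'_2 − x_2| ≤ h/2. Set a_1 = (m_0 x_2 − m_1)/(x_2 − x_1) and a'_1 = (m_0 x'_2 − m_1)/(x'_2 − x'_1). Then |a'_1| ≤ 4|a_1| + 2|m_0|. -/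
/-- Bound on the perturbed first amplitude of the two-node Prony inversion:
if `x₂ − x₁ = h`, `x'₂ − x'₁ ≥ h/4` and `|x'₂ − x₂| ≤ h/2`, then
`|a'₁| ≤ 4|a₁| + 2|m₀|` for the amplitude formulas `a₁, a'₁`. -/
theorem perturbed_amplitude_bound
    (m₀ m₁ h x₁ x₂ x₁' x₂' : ℝ)
    (hh : 0 < h)
    (hx : x₁ < x₂) (hx' : x₁' < x₂')
    (hsep : x₂ - x₁ = h)
    (hsep' : x₂' - x₁' ≥ h / 4)
    (hclose : |x₂' - x₂| ≤ h / 2) :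
    |(m₀ * x₂' - m₁) / (x₂' - x₁')| ≤ 4 * |(m₀ * x₂ - m₁) / (x₂ - x₁)| + 2 * |m₀| := by
  have hd : 0 < x₂' - x₁' := by linarith
  have hnum : |m₀ * x₂' - m₁| ≤ |m₀ * x₂ - m₁| + |m₀| * (h / 2) := by
    have he : m₀ * x₂' - m₁ = (m₀ * x₂ - m₁) + m₀ * (x₂' - x₂) := by ring
    rw [he]
    calc |(m₀ * x₂ - m₁) + m₀ * (x₂' - x₂)|
        ≤ |m₀ * x₂ - m₁| + |m₀ * (x₂' - x₂)| := abs_add_le _ _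
      _ ≤ |m₀ * x₂ - m₁| + |m₀| * (h / 2) := by
          rw [abs_mul]
          nlinarith [abs_nonneg m₀]
  have ha : |m₀ * x₂ - m₁| = |(m₀ * x₂ - m₁) / (x₂ - x₁)| * h := by
    rw [abs_div, hsep, abs_of_pos hh]
    field_simp
  rw [abs_div, abs_of_pos hd, div_le_iff₀ hd]
  nlinarith [abs_nonneg ((m₀ * x₂ - m₁) / (x₂ - x₁)), abs_nonneg m₀,
    abs_nonneg (m₀ * x₂' - m₁)]
end

section
/- Let m_0, m_1, m_2, p, q be real numbers satisfying m_0·p·q − m_1·(p + q) + m_2 = 0, and let r > 0. Then there exists a point (p', q') ∈ ℝ² with m_0·p'·q' − m_1·(p' + q') + m_2 = 0 and (p' − p)² + (q' − q)² = r². In particular, the plane algebraic curve m_0·x_1·x_2 − m_1·(x_1 + x_2) + m_2 = 0 passing through a given point meets the boundary circle of every disk centered at that point. -/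
/-! The defining polynomial is affine in `x₁`, so its values at the two points `(p ± r, q)` of the
circle average to its value `0` at the centre and hence have opposite signs. The intermediate value
theorem along a half circle joining them then yields a zero on the circle. -/

open Real Set

theorem exists_zero_on_circle_of_mul_nonpos {f : ℝ × ℝ → ℝ} (hf : Continuous f) {p q r : ℝ}
    (hsign : f (p + r, q) * f (p - r, q) ≤ 0) :
    ∃ z : ℝ × ℝ, f z = 0 ∧ (z.1 - p) ^ 2 + (z.2 - q) ^ 2 = r ^ 2 := by
  set γ : ℝ → ℝ × ℝ := fun θ => (p + r * cos θ, q + r * sin θ)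
  have hγ0 : γ 0 = (p + r, q) := by simp [γ]
  have hγπ : γ π = (p - r, q) := by simp [γ, sub_eq_add_neg]
  have hzero : (0 : ℝ) ∈ uIcc (f (γ 0)) (f (γ π)) := by
    rw [hγ0, hγπ, mem_uIcc]
    rcases mul_nonpos_iff.mp hsign with ⟨h₁, h₂⟩ | ⟨h₁, h₂⟩
    · exact Or.inr ⟨h₂, h₁⟩
    · exact Or.inl ⟨h₁, h₂⟩
  obtain ⟨θ, -, hθ⟩ :=
    intermediate_value_uIcc (hf.comp (by fun_prop : Continuous γ)).continuousOn hzero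
  refine ⟨γ θ, hθ, ?_⟩
  calc (p + r * cos θ - p) ^ 2 + (q + r * sin θ - q) ^ 2 = r ^ 2 * (sin θ ^ 2 + cos θ ^ 2) := by
        ring
    _ = r ^ 2 := by rw [sin_sq_add_cos_sq, mul_one]

theorem prony_curve_meets_circle_general
    (m₀ m₁ m₂ p q r : ℝ)
    (hpq : m₀ * p * q - m₁ * (p + q) + m₂ = 0) :
    ∃ p' q' : ℝ,
      m₀ * p' * q' - m₁ * (p' + q') + m₂ = 0 ∧
      (p' - p) ^ 2 + (q' - q) ^ 2 = r ^ 2 := by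
  set F : ℝ × ℝ → ℝ := fun z => m₀ * z.1 * z.2 - m₁ * (z.1 + z.2) + m₂
  have hantipodal : F (p + r, q) = -F (p - r, q) := by
    simp only [F]
    linear_combination 2 * hpq
  have hsign : F (p + r, q) * F (p - r, q) ≤ 0 := by
    rw [hantipodal, neg_mul]
    exact neg_nonpos.mpr (mul_self_nonneg _)
  obtain ⟨⟨x, y⟩, hx, hxy⟩ := exists_zero_on_circle_of_mul_nonpos (by fun_prop) hsign
  exact ⟨x, y, hx, hxy⟩

/-- The plane curve `m₀x₁x₂ − m₁(x₁+x₂) + m₂ = 0` through a point `(p,q)`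
meets the circle of every radius `r > 0` centered at `(p,q)`. -/
theorem prony_curve_meets_circle
    (m₀ m₁ m₂ p q r : ℝ) (hr : 0 < r)
    (hpq : m₀ * p * q - m₁ * (p + q) + m₂ = 0) :
    ∃ p' q' : ℝ,
      m₀ * p' * q' - m₁ * (p' + q') + m₂ = 0 ∧
      (p' - p) ^ 2 + (q' - q) ^ 2 = r ^ 2 :=
  prony_curve_meets_circle_general m₀ m₁ m₂ p q r hpq
end

section
/- Let a, b, φ, θ be real numbers with ab ≠ 0 and sin((φ−θ)/2) ≠ 0; set Δ = φ − θ, m_k = a·e^{ikφ} + b·e^{ikθ}, and M_k = |m_k|. Then M_0² − M_1² ≠ 0 and cos Δ = (2M_1² − M_0² − M_2²)/(2(M_0² − M_1²)). -/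
/-!
Expanding `|a e^{ix} + b e^{iy}|²` gives `M_k² = a² + b² + 2ab cos(kΔ)`. Hence
`M₀² − M₁² = 2ab(1 − cos Δ) = 4ab sin²(Δ/2)`, which is nonzero, and by `cos 2Δ = 2cos²Δ − 1`,
`2M₁² − M₀² − M₂² = 4ab cos Δ (1 − cos Δ)`; dividing the two gives `cos Δ`.
-/

open Complex in
theorem norm_ofReal_mul_exp_add_ofReal_mul_exp_sq (a b x y : ℝ) :
    ‖(a : ℂ) * exp (I * x) + (b : ℂ) * exp (I * y)‖ ^ 2
      = a ^ 2 + b ^ 2 + 2 * a * b * Real.cos (x - y) := by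
  rw [← normSq_eq_norm_sq, normSq_add, mul_comm I (x : ℂ), mul_comm I (y : ℂ)]
  have hprod : (a : ℂ) * exp (x * I) * (starRingEnd ℂ) ((b : ℂ) * exp (y * I))
      = ((a * b : ℝ) : ℂ) * exp ((x - y : ℝ) * I) := by
    rw [map_mul, conj_ofReal, ← exp_conj, map_mul, conj_ofReal, conj_I, mul_mul_mul_comm,
      ← exp_add]
    push_cast
    ring_nf
  have hcross : ((a : ℂ) * exp (x * I) * (starRingEnd ℂ) ((b : ℂ) * exp (y * I))).re
      = a * b * Real.cos (x - y) := by
    rw [hprod, re_ofReal_mul, exp_ofReal_mul_I_re]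
  simp only [normSq_eq_norm_sq, norm_mul, norm_real, Real.norm_eq_abs, norm_exp_ofReal_mul_I,
    mul_one, sq_abs, hcross]
  ring

theorem Real.cos_ne_one_of_sin_half_ne_zero {x : ℝ} (h : Real.sin (x / 2) ≠ 0) :
    Real.cos x ≠ 1 := by
  rw [← mul_div_cancel₀ x two_ne_zero, Real.cos_two_mul_eq_one_sub]
  intro hcos
  exact h (pow_eq_zero_iff two_ne_zero |>.mp (by linarith))

theorem cos_eq_of_sq_moments {a b c M₀ M₁ M₂ : ℝ} (hab : a * b ≠ 0) (hc : c ≠ 1)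
    (h₀ : M₀ = a ^ 2 + b ^ 2 + 2 * a * b) (h₁ : M₁ = a ^ 2 + b ^ 2 + 2 * a * b * c)
    (h₂ : M₂ = a ^ 2 + b ^ 2 + 2 * a * b * (2 * c ^ 2 - 1)) :
    M₀ - M₁ ≠ 0 ∧ c = (2 * M₁ - M₀ - M₂) / (2 * (M₀ - M₁)) := by
  have hdiff : M₀ - M₁ = 2 * (a * b) * (1 - c) := by rw [h₀, h₁]; ring
  have hne : M₀ - M₁ ≠ 0 := by
    rw [hdiff]
    exact mul_ne_zero (mul_ne_zero two_ne_zero hab) (sub_ne_zero.mpr hc.symm)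
  refine ⟨hne, ?_⟩
  rw [eq_div_iff (mul_ne_zero two_ne_zero hne), h₀, h₁, h₂]
  ring

/-- Recovery of the phase difference: with `m_k = a·e^{ikφ} + b·e^{ikθ}`,
`M_k = |m_k|`, `Δ = φ − θ`, `ab ≠ 0` and `sin(Δ/2) ≠ 0`, one has `M₀² − M₁² ≠ 0` and
`cos Δ = (2M₁² − M₀² − M₂²)/(2(M₀² − M₁²))`. -/
theorem phase_difference_recovery
    (a b φ θ : ℝ) (hab : a * b ≠ 0) (hs : Real.sin ((φ - θ) / 2) ≠ 0)
    (M : ℕ → ℝ)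
    (hM : ∀ k : ℕ, M k = ‖((a : ℂ) * Complex.exp (Complex.I * k * φ) +
        (b : ℂ) * Complex.exp (Complex.I * k * θ))‖) :
    M 0 ^ 2 - M 1 ^ 2 ≠ 0 ∧
    Real.cos (φ - θ) =
      (2 * M 1 ^ 2 - M 0 ^ 2 - M 2 ^ 2) / (2 * (M 0 ^ 2 - M 1 ^ 2)) := by
  have hMsq (k : ℕ) : M k ^ 2 = a ^ 2 + b ^ 2 + 2 * a * b * Real.cos (k * (φ - θ)) := by
    rw [hM k, mul_sub, ← norm_ofReal_mul_exp_add_ofReal_mul_exp_sq]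
    push_cast
    ring_nf
  refine cos_eq_of_sq_moments hab (Real.cos_ne_one_of_sin_half_ne_zero hs) ?_ ?_ ?_
  · simpa using hMsq 0
  · simpa using hMsq 1
  · simpa [Real.cos_two_mul] using hMsq 2
end
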